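/- Let 𝒰, 𝒱 be finite sets, p a probability distribution on 𝒰×𝒱, ε ∈ [0,1], and let (ρ_{BS|u,v}) be density matrices on ℂ^{d_B}⊗ℂ^{d_S}. Let e be a symbol not in 𝒱, 𝒱̃ := 𝒱 ∪ {e}, and define ρ_{UVṼBS} := ∑_{u,v} p(u,v) |u⟩⟨u| ⊗ |v⟩⟨v| ⊗ ((1−ε)|v⟩⟨v| + ε|e⟩⟨e|) ⊗ ρ_{BS|u,v}. With U′ := (U,Ṽ) (the pair register), the mutual informations of the marginals of ρ_{UVṼBS} satisfy I[U′;B] − I[U′;S] = I[U;B] − I[U;S] + (1 − ε)·( I[V;B|U] − I[V;S|U] ). -/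

import Mathlib

open scoped Kronecker ComplexOrder
open Matrix

noncomputable section

/-- Apply a real function to a Hermitian matrix via the spectral decomposition
(returns `0` on non-Hermitian matrices). -/
noncomputable def matCalc {n : Type*} [Fintype n] [DecidableEq n] (f : ℝ → ℝ)
    (M : Matrix n n ℂ) : Matrix n n ℂ :=
  if h : M.IsHermitian then
    (Matrix.IsHermitian.eigenvectorUnitary h : Matrix n n ℂ) *
      Matrix.diagonal (fun i => (f (h.eigenvalues i) : ℂ)) *
      star (Matrix.IsHermitian.eigenvectorUnitary h : Matrix n n ℂ)
  else 0

/-- Functional-calculus power of a positive semidefinite matrix, taken on the support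
(the eigenvalue `0` is sent to `0`). -/
noncomputable def mpow {n : Type*} [Fintype n] [DecidableEq n]
    (M : Matrix n n ℂ) (c : ℝ) : Matrix n n ℂ :=
  matCalc (fun x => if x = 0 then 0 else Real.rpow x c) M

/-- The von Neumann entropy `−Tr[ρ log₂ ρ]` (with the convention `0·log₂0 = 0`). -/
noncomputable def vnEntropy {n : Type*} [Fintype n] [DecidableEq n]
    (ρ : Matrix n n ℂ) : ℝ :=
  (Matrix.trace (matCalc (fun x => -(x * Real.logb 2 x)) ρ)).re

/-- A density matrix: positive semidefinite with unit trace. -/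
def IsDensityMatrix {n : Type*} [Fintype n] (ρ : Matrix n n ℂ) : Prop :=
  ρ.PosSemidef ∧ ρ.trace = 1

/-- A quantum channel: a map admitting a Kraus representation. -/
def IsQChannel {m n : Type*} [Fintype m] [DecidableEq m] [Fintype n]
    (Φ : Matrix m m ℂ → Matrix n n ℂ) : Prop :=
  ∃ (k : ℕ) (K : Fin k → Matrix n m ℂ),
    (∑ i, (K i)ᴴ * K i = 1) ∧ ∀ X, Φ X = ∑ i, K i * X * (K i)ᴴ

/-- Tensor extension `Φ ⊗ Ψ` of two (linear) maps on matrices. -/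
noncomputable def mapTensor {m m' n n' : Type*} [Fintype m] [DecidableEq m]
    [Fintype m'] [Fintype n] [Fintype n']
    (Φ : Matrix m m ℂ → Matrix n n ℂ) (Ψ : Matrix m' m' ℂ → Matrix n' n' ℂ)
    (X : Matrix (m × m') (m × m') ℂ) : Matrix (n × n') (n × n') ℂ :=
  Matrix.of fun p q =>
    ∑ e : m, ∑ g : m,
      Φ (Matrix.single e g 1) p.1 q.1 *
        Ψ (Matrix.of fun f h => X (e, f) (g, h)) p.2 q.2

/-- `k`-fold tensor power `Φ^{⊗k}` of a (linear) map on matrices. -/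
noncomputable def mapTPow {m n : Type*} [Fintype m] [DecidableEq m] [Fintype n]
    (Φ : Matrix m m ℂ → Matrix n n ℂ) (k : ℕ)
    (X : Matrix (Fin k → m) (Fin k → m) ℂ) : Matrix (Fin k → n) (Fin k → n) ℂ :=
  Matrix.of fun x y =>
    ∑ e : Fin k → m, ∑ g : Fin k → m,
      X e g * ∏ i, Φ (Matrix.single (e i) (g i) 1) (x i) (y i)

/-- `k`-fold Kronecker (tensor) power of a matrix. -/
noncomputable def tpow {d : Type*} (ρ : Matrix d d ℂ) (k : ℕ) :
    Matrix (Fin k → d) (Fin k → d) ℂ :=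
  Matrix.of fun x y => ∏ i, ρ (x i) (y i)

/-- Partial trace over the first tensor factor. -/
noncomputable def traceOutFst {a b : Type*} [Fintype a]
    (M : Matrix (a × b) (a × b) ℂ) : Matrix b b ℂ :=
  Matrix.of fun j j' => ∑ i, M (i, j) (i, j')

/-- Partial trace over the second tensor factor. -/
noncomputable def traceOutSnd {a b : Type*} [Fintype b]
    (M : Matrix (a × b) (a × b) ℂ) : Matrix a a ℂ :=
  Matrix.of fun i i' => ∑ j, M (i, j) (i', j)

/-- Quantum mutual information `I[X;Y] = H(ρ_X) + H(ρ_Y) − H(ρ_{XY})` of a bipartite state. -/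
noncomputable def mutInfo {a b : Type*} [Fintype a] [DecidableEq a] [Fintype b] [DecidableEq b]
    (ρ : Matrix (a × b) (a × b) ℂ) : ℝ :=
  vnEntropy (traceOutSnd ρ) + vnEntropy (traceOutFst ρ) - vnEntropy ρ

/-- Fidelity `F(ρ,σ) = Tr √(√σ ρ √σ)`. -/
noncomputable def fidelity {n : Type*} [Fintype n] [DecidableEq n]
    (ρ σ : Matrix n n ℂ) : ℝ :=
  (Matrix.trace (mpow (mpow σ (1/2) * ρ * mpow σ (1/2)) (1/2))).re

/-- Purified distance `P(ρ,σ) = √(1 − F(ρ,σ)²)`. -/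
noncomputable def purifiedDist {n : Type*} [Fintype n] [DecidableEq n]
    (ρ σ : Matrix n n ℂ) : ℝ :=
  Real.sqrt (1 - fidelity ρ σ ^ 2)

/-- Number of distinct eigenvalues (cardinality of the spectrum). -/
noncomputable def nEig {n : Type*} [Fintype n] [DecidableEq n] (M : Matrix n n ℂ) : ℕ :=
  (spectrum ℂ M).ncard

/-- The set of (distinct) eigenvalues of a Hermitian matrix, as a finset. -/
noncomputable def eigSet {n : Type*} [Fintype n] [DecidableEq n] (σ : Matrix n n ℂ) : Finset ℝ :=
  if h : σ.IsHermitian then Finset.univ.image h.eigenvalues else ∅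

/-- Spectral projection of a Hermitian matrix onto the eigenvalue `t`. -/
noncomputable def eigProj {n : Type*} [Fintype n] [DecidableEq n]
    (σ : Matrix n n ℂ) (t : ℝ) : Matrix n n ℂ :=
  matCalc (fun x => if x = t then 1 else 0) σ

/-- The pinching map `E_σ(X) = ∑_j P_j X P_j` with respect to `σ`. -/
noncomputable def pinch {n : Type*} [Fintype n] [DecidableEq n]
    (σ X : Matrix n n ℂ) : Matrix n n ℂ :=
  ∑ t ∈ eigSet σ, eigProj σ t * X * eigProj σ t

/-- The pinching map `id ⊗ E_σ` acting on the second factor of a bipartite system. -/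
noncomputable def pinchSnd {v n : Type*} [Fintype v] [DecidableEq v] [Fintype n] [DecidableEq n]
    (σ : Matrix n n ℂ) (Y : Matrix (v × n) (v × n) ℂ) : Matrix (v × n) (v × n) ℂ :=
  ∑ t ∈ eigSet σ, ((1 : Matrix v v ℂ) ⊗ₖ eigProj σ t) * Y * ((1 : Matrix v v ℂ) ⊗ₖ eigProj σ t)

/-- The projection `{A ≥ B}` onto the nonnegative eigenspaces of `A − B`. -/
noncomputable def projGE {n : Type*} [Fintype n] [DecidableEq n]
    (A B : Matrix n n ℂ) : Matrix n n ℂ :=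
  matCalc (fun x => if 0 ≤ x then 1 else 0) (A - B)

/-- `Q_{1−α}(ρ‖σ) = Tr[(σ^{α/(2(1−α))} ρ σ^{α/(2(1−α))})^{1−α}]`. -/
noncomputable def Qfun {n : Type*} [Fintype n] [DecidableEq n]
    (a : ℝ) (ρ σ : Matrix n n ℂ) : ℝ :=
  (Matrix.trace (mpow (mpow σ (a/(2*(1-a))) * ρ * mpow σ (a/(2*(1-a)))) (1-a))).re

/-- The sandwiched Rényi relative entropy
`D̲_β(ρ‖σ) = (1/(β−1)) log₂ Tr[(σ^{−(β−1)/(2β)} ρ σ^{−(β−1)/(2β)})^β]`. -/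
noncomputable def sRenyi {n : Type*} [Fintype n] [DecidableEq n]
    (b : ℝ) (ρ σ : Matrix n n ℂ) : ℝ :=
  (1/(b-1)) *
    Real.logb 2 ((Matrix.trace (mpow (mpow σ (-(b-1)/(2*b)) * ρ * mpow σ (-(b-1)/(2*b))) b)).re)

/-- The rank-one projector `|u⟩⟨u|`. -/
noncomputable def ketbra {n : Type*} [DecidableEq n] (u : n) : Matrix n n ℂ :=
  Matrix.single u u 1

/-- The classical–quantum state `∑_{u,v} p(u,v) |u⟩⟨u| ⊗ |v⟩⟨v| ⊗ ρ_{B|u,v}`. -/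
noncomputable def cqState {U V B : Type*} [Fintype U] [DecidableEq U]
    [Fintype V] [DecidableEq V] [Fintype B]
    (p : U × V → ℝ) (ρ : U → V → Matrix B B ℂ) :
    Matrix ((U × V) × B) ((U × V) × B) ℂ :=
  ∑ u, ∑ v, (p (u, v) : ℂ) • ((ketbra u ⊗ₖ ketbra v) ⊗ₖ ρ u v)

/-- A generic classical–quantum joint state with labels `lab i` and states `ρ i`. -/
noncomputable def cqJoint {ι X B : Type*} [Fintype ι] [Fintype X] [Fintype B]
    (p : ι → ℝ) (lab : ι → Matrix X X ℂ) (ρ : ι → Matrix B B ℂ) :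
    Matrix (X × B) (X × B) ℂ :=
  ∑ i, (p i : ℂ) • (lab i ⊗ₖ ρ i)

/-- Rényi conditional mutual information `I̲_β[V;B|U]`, given as the infimum over families of
positive definite density matrices `σ_{B|u}`. -/
noncomputable def renyiCondMI {U V B : Type*} [Fintype U] [DecidableEq U]
    [Fintype V] [DecidableEq V] [Fintype B] [DecidableEq B]
    (b : ℝ) (p : U × V → ℝ) (ρ : U → V → Matrix B B ℂ) : ℝ :=
  sInf { r | ∃ σ : U → Matrix B B ℂ,
    (∀ u, (σ u).PosDef ∧ (σ u).trace = 1) ∧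
    r = sRenyi b (cqState p ρ) (cqState p (fun u _ => σ u)) }

/-- The state of the erasure register: `(1−ε)|v⟩⟨v| + ε|e⟩⟨e|` (the erasure symbol is `none`). -/
noncomputable def erasureKet {V : Type*} [Fintype V] [DecidableEq V] (ε : ℝ) (v : V) :
    Matrix (Option V) (Option V) ℂ :=
  ((1 - ε : ℝ) : ℂ) • ketbra (Option.some v) + (ε : ℂ) • ketbra (Option.none)


/-!
A classical–quantum state `∑ₓ |x⟩⟨x| ⊗ Mₓ` is a block-diagonal matrix, so its entropy is
`∑ₓ H(Mₓ)` and `I[X;B] = H(∑ₓ Mₓ) + ∑ₓ (η(Tr Mₓ) − H(Mₓ))` with `η(t) = -t log₂ t`. The summand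
`η(Tr M) − H(M)` is homogeneous of degree one under real scaling of `M`. The state of `UṼB` is the
classical–quantum state over `U × Option V` with blocks `ε ∑ᵥ p(u,v) ρ_{B|u,v}` at the erasure
symbol and `(1 − ε) p(u,v) ρ_{B|u,v}` at `some v`; it has the same `B`-marginal as the states of
`UB` and `UVB`, so `I[UṼ;B] = ε I[U;B] + (1 − ε) I[UV;B]`. The same holds for `S`, and subtracting
the two identities gives the theorem.
-/

open Polynomial

def negMulLog₂ (x : ℝ) : ℝ := -(x * Real.logb 2 x)

lemma negMulLog₂_mul (c t : ℝ) : negMulLog₂ (c * t) = c * negMulLog₂ t + t * negMulLog₂ c := by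
  have h := Real.negMulLog_mul c t
  simp only [negMulLog₂, Real.logb, Real.negMulLog] at h ⊢
  field_simp
  linear_combination h

lemma Matrix.isHermitian_diagonal_ofReal {n : Type*} [DecidableEq n] (d : n → ℝ) :
    (diagonal fun i => (d i : ℂ)).IsHermitian :=
  isHermitian_diagonal_of_self_adjoint _ (funext fun i => Complex.conj_ofReal (d i))

lemma Matrix.IsHermitian.real_smul {n : Type*} {A : Matrix n n ℂ} (hA : A.IsHermitian) (c : ℝ) :
    ((c : ℂ) • A).IsHermitian :=
  hA.smul (Complex.conj_ofReal c)

lemma Matrix.isHermitian_sum_real_smul {ι n : Type*} {A : ι → Matrix n n ℂ}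
    (hA : ∀ i, (A i).IsHermitian) (s : Finset ι) (c : ι → ℝ) :
    (∑ i ∈ s, (c i : ℂ) • A i).IsHermitian :=
  isSelfAdjoint_sum s fun i _ => (hA i).real_smul (c i)

lemma Matrix.IsHermitian.ofReal_re_trace {n : Type*} [Fintype n] {A : Matrix n n ℂ}
    (hA : A.IsHermitian) : (A.trace.re : ℂ) = A.trace := by
  refine Complex.conj_eq_iff_re.mp ?_
  rw [← Complex.star_def, ← trace_conjTranspose, hA]

lemma isHermitian_traceOutSnd {a b : Type*} [Fintype b] {M : Matrix (a × b) (a × b) ℂ}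
    (hM : M.IsHermitian) : (traceOutSnd M).IsHermitian := by
  ext i i'
  simp only [traceOutSnd, conjTranspose_apply, of_apply, star_sum]
  exact Finset.sum_congr rfl fun j _ => by rw [← conjTranspose_apply, hM]

lemma isHermitian_traceOutFst {a b : Type*} [Fintype a] {M : Matrix (a × b) (a × b) ℂ}
    (hM : M.IsHermitian) : (traceOutFst M).IsHermitian := by
  ext j j'
  simp only [traceOutFst, conjTranspose_apply, of_apply, star_sum]
  exact Finset.sum_congr rfl fun i _ => by rw [← conjTranspose_apply, hM]

lemma Matrix.charpoly_blockDiagonal {m o R : Type*} [Fintype m] [DecidableEq m] [Fintype o]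
    [DecidableEq o] [CommRing R] (M : o → Matrix m m R) :
    (blockDiagonal M).charpoly = ∏ k, (M k).charpoly := by
  simp only [charpoly]
  rw [← det_blockDiagonal]
  congr 1
  ext ⟨i, k⟩ ⟨j, k'⟩
  by_cases hk : k = k'
  · subst hk
    by_cases hij : i = j <;> simp [blockDiagonal_apply, hij]
  · simp [blockDiagonal_apply, hk]

lemma Matrix.kronecker_finset_sum {ι l m n o R : Type*} [CommSemiring R] (K : Matrix l m R)
    (s : Finset ι) (N : ι → Matrix n o R) : K ⊗ₖ ∑ i ∈ s, N i = ∑ i ∈ s, K ⊗ₖ N i :=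
  map_sum (kroneckerBilinear (R := R) K) N s

lemma ketbra_kronecker_ketbra {X Y : Type*} [DecidableEq X] [DecidableEq Y] (x : X) (y : Y) :
    ketbra x ⊗ₖ ketbra y = ketbra (x, y) := by
  rw [ketbra, ketbra, single_kronecker_single, mul_one]
  rfl

section Entropy

variable {n : Type*} [Fintype n] [DecidableEq n] {A B : Matrix n n ℂ}

lemma vnEntropy_eq_sum_eigenvalues (hA : A.IsHermitian) :
    vnEntropy A = ∑ i, negMulLog₂ (hA.eigenvalues i) := by
  rw [vnEntropy, matCalc, dif_pos hA, trace_mul_cycle, Unitary.coe_star_mul_self, one_mul,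
    trace_diagonal, ← Complex.ofReal_sum, Complex.ofReal_re]
  rfl

lemma vnEntropy_eq_sum_roots_charpoly (hA : A.IsHermitian) :
    vnEntropy A = (A.charpoly.roots.map fun z => negMulLog₂ z.re).sum := by
  rw [vnEntropy_eq_sum_eigenvalues hA, hA.roots_charpoly_eq_eigenvalues, Multiset.map_map]
  rfl

lemma vnEntropy_eq_of_charpoly_eq (hA : A.IsHermitian) (hB : B.IsHermitian)
    (h : A.charpoly = B.charpoly) : vnEntropy A = vnEntropy B := by
  rw [vnEntropy_eq_sum_roots_charpoly hA, vnEntropy_eq_sum_roots_charpoly hB, h]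

lemma vnEntropy_diagonal (d : n → ℝ) :
    vnEntropy (diagonal fun i => (d i : ℂ)) = ∑ i, negMulLog₂ (d i) := by
  rw [vnEntropy_eq_sum_roots_charpoly (isHermitian_diagonal_ofReal d), charpoly_diagonal,
    roots_prod _ _ (Finset.prod_ne_zero_iff.mpr fun i _ => X_sub_C_ne_zero _)]
  simp only [roots_X_sub_C, Multiset.bind_singleton, Multiset.map_map]
  rfl

lemma vnEntropy_real_smul (hA : A.IsHermitian) (c : ℝ) :
    vnEntropy ((c : ℂ) • A) = c * vnEntropy A + negMulLog₂ c * A.trace.re := by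
  have hcharpoly : ((c : ℂ) • A).charpoly =
      (diagonal fun i => ((c * hA.eigenvalues i : ℝ) : ℂ)).charpoly := by
    conv_lhs => rw [hA.spectral_theorem, ← map_smul, Unitary.conjStarAlgAut_apply,
      charpoly_mul_comm, ← mul_assoc, Unitary.coe_star_mul_self, one_mul]
    congr 1
    ext i j
    by_cases h : i = j <;> simp [h]
  rw [vnEntropy_eq_of_charpoly_eq (hA.real_smul c) (isHermitian_diagonal_ofReal _) hcharpoly,
    vnEntropy_diagonal, vnEntropy_eq_sum_eigenvalues hA, hA.trace_eq_sum_eigenvalues,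
    Complex.re_sum, Finset.mul_sum, Finset.mul_sum, ← Finset.sum_add_distrib]
  refine Finset.sum_congr rfl fun i _ => ?_
  rw [negMulLog₂_mul, mul_comm (negMulLog₂ c)]
  rfl

/-- For `A = p • ρ` with `ρ` a state this is `-p H(ρ)`. -/
def entropyGap (A : Matrix n n ℂ) : ℝ := negMulLog₂ A.trace.re - vnEntropy A

lemma entropyGap_real_smul (hA : A.IsHermitian) (c : ℝ) :
    entropyGap ((c : ℂ) • A) = c * entropyGap A := by
  rw [entropyGap, entropyGap, vnEntropy_real_smul hA, trace_smul, smul_eq_mul,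
    Complex.re_ofReal_mul, negMulLog₂_mul]
  ring

end Entropy

section ClassicalQuantum

variable {X B : Type*} [Fintype X] [DecidableEq X] (M : X → Matrix B B ℂ)

lemma sum_ketbra_kronecker_eq_reindex_blockDiagonal :
    ∑ x, ketbra x ⊗ₖ M x =
      reindex (Equiv.prodComm B X) (Equiv.prodComm B X) (blockDiagonal M) := by
  ext ⟨x, b⟩ ⟨x', b'⟩
  by_cases hx : x = x' <;>
    simp [ketbra, Matrix.sum_apply, single_apply, blockDiagonal_apply, ite_and, hx]

lemma traceOutFst_sum_ketbra_kronecker : traceOutFst (∑ x, ketbra x ⊗ₖ M x) = ∑ x, M x := by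
  rw [sum_ketbra_kronecker_eq_reindex_blockDiagonal]
  ext b b'
  simp [traceOutFst, Matrix.sum_apply]

variable {M} in
lemma isHermitian_sum_ketbra_kronecker (hM : ∀ x, (M x).IsHermitian) :
    (∑ x, ketbra x ⊗ₖ M x).IsHermitian := by
  rw [sum_ketbra_kronecker_eq_reindex_blockDiagonal]
  exact (isHermitian_blockDiagonal_iff.mpr hM).submatrix _

variable [Fintype B]

lemma traceOutSnd_sum_ketbra_kronecker :
    traceOutSnd (∑ x, ketbra x ⊗ₖ M x) = diagonal fun x => (M x).trace := by
  rw [sum_ketbra_kronecker_eq_reindex_blockDiagonal]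
  ext x x'
  by_cases hx : x = x' <;> simp [traceOutSnd, blockDiagonal_apply, trace, hx]

variable [DecidableEq B] {M}

lemma vnEntropy_sum_ketbra_kronecker (hM : ∀ x, (M x).IsHermitian) :
    vnEntropy (∑ x, ketbra x ⊗ₖ M x) = ∑ x, vnEntropy (M x) := by
  rw [vnEntropy_eq_sum_roots_charpoly (isHermitian_sum_ketbra_kronecker hM),
    sum_ketbra_kronecker_eq_reindex_blockDiagonal, charpoly_reindex, charpoly_blockDiagonal,
    roots_prod _ _ (Finset.prod_ne_zero_iff.mpr fun x _ => (charpoly_monic _).ne_zero),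
    Multiset.map_bind, Multiset.sum_bind]
  exact Finset.sum_congr rfl fun x _ => (vnEntropy_eq_sum_roots_charpoly (hM x)).symm

lemma mutInfo_sum_ketbra_kronecker (hM : ∀ x, (M x).IsHermitian) :
    mutInfo (∑ x, ketbra x ⊗ₖ M x) = vnEntropy (∑ x, M x) + ∑ x, entropyGap (M x) := by
  have htrace : (diagonal fun x => (M x).trace) = diagonal fun x => ((M x).trace.re : ℂ) :=
    congrArg diagonal (funext fun x => (hM x).ofReal_re_trace.symm)
  rw [mutInfo, traceOutSnd_sum_ketbra_kronecker, traceOutFst_sum_ketbra_kronecker, htrace,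
    vnEntropy_diagonal, vnEntropy_sum_ketbra_kronecker hM]
  simp only [entropyGap, Finset.sum_sub_distrib]
  ring

end ClassicalQuantum

section Erasure

variable {U V B : Type*} [Fintype U] [Fintype V] (p : U × V → ℝ) (ε : ℝ)
  (A : U → V → Matrix B B ℂ)

/-- The blocks of the state of `UṼB` as a classical–quantum state over `U × Option V`;
`none` is the erasure symbol. -/
def erasureBlock : U × Option V → Matrix B B ℂ
  | (u, none) => (ε : ℂ) • ∑ v, (p (u, v) : ℂ) • A u v
  | (u, some v) => ((1 - ε : ℝ) : ℂ) • (p (u, v) : ℂ) • A u v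

lemma sum_erasureBlock : ∑ x, erasureBlock p ε A x = ∑ u, ∑ v, (p (u, v) : ℂ) • A u v := by
  simp only [Fintype.sum_prod_type, Fintype.sum_option, erasureBlock, ← Finset.smul_sum,
    ← add_smul]
  push_cast
  simp

lemma sum_entropyGap_erasureBlock [Fintype B] [DecidableEq B]
    (hA : ∀ u v, (A u v).IsHermitian) :
    ∑ x, entropyGap (erasureBlock p ε A x) =
      ε * ∑ u, entropyGap (∑ v, (p (u, v) : ℂ) • A u v) +
        (1 - ε) * ∑ x : U × V, entropyGap ((p x : ℂ) • A x.1 x.2) := by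
  rw [Fintype.sum_prod_type, Fintype.sum_prod_type, Finset.mul_sum, Finset.mul_sum,
    ← Finset.sum_add_distrib]
  refine Finset.sum_congr rfl fun u _ => ?_
  rw [Fintype.sum_option, erasureBlock,
    entropyGap_real_smul (isHermitian_sum_real_smul (hA u) _ _), Finset.mul_sum]
  congr 1
  exact Finset.sum_congr rfl fun v _ => entropyGap_real_smul ((hA u v).real_smul _) _

variable [DecidableEq U]

lemma sum_sum_smul_ketbra_kronecker :
    ∑ u, ∑ v, (p (u, v) : ℂ) • (ketbra u ⊗ₖ A u v) =
      ∑ u, ketbra u ⊗ₖ ∑ v, (p (u, v) : ℂ) • A u v := by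
  simp only [kronecker_finset_sum, kronecker_smul]

variable [DecidableEq V]

lemma sum_sum_smul_ketbra_ketbra_kronecker :
    ∑ u, ∑ v, (p (u, v) : ℂ) • ((ketbra u ⊗ₖ ketbra v) ⊗ₖ A u v) =
      ∑ x : U × V, ketbra x ⊗ₖ ((p x : ℂ) • A x.1 x.2) := by
  simp only [Fintype.sum_prod_type, ketbra_kronecker_ketbra, kronecker_smul]

lemma sum_sum_smul_ketbra_erasureKet_kronecker :
    ∑ u, ∑ v, (p (u, v) : ℂ) • ((ketbra u ⊗ₖ erasureKet ε v) ⊗ₖ A u v) =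
      ∑ x, ketbra x ⊗ₖ erasureBlock p ε A x := by
  simp only [Fintype.sum_prod_type, Fintype.sum_option, erasureBlock, erasureKet, kronecker_add,
    kronecker_smul, smul_kronecker, ketbra_kronecker_ketbra, add_kronecker, smul_add,
    Finset.sum_add_distrib, kronecker_finset_sum, Finset.smul_sum, smul_comm (p _ : ℂ)]
  exact add_comm _ _

lemma mutInfo_erasure [Fintype B] [DecidableEq B] (hA : ∀ u v, (A u v).IsHermitian) :
    mutInfo (∑ u, ∑ v, (p (u, v) : ℂ) • ((ketbra u ⊗ₖ erasureKet ε v) ⊗ₖ A u v)) =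
      ε * mutInfo (∑ u, ∑ v, (p (u, v) : ℂ) • (ketbra u ⊗ₖ A u v)) +
        (1 - ε) * mutInfo (∑ u, ∑ v, (p (u, v) : ℂ) • ((ketbra u ⊗ₖ ketbra v) ⊗ₖ A u v)) := by
  have hσ u : (∑ v, (p (u, v) : ℂ) • A u v).IsHermitian := isHermitian_sum_real_smul (hA u) _ _
  have hpA (x : U × V) : ((p x : ℂ) • A x.1 x.2).IsHermitian := (hA x.1 x.2).real_smul _
  have hblock : ∀ x, (erasureBlock p ε A x).IsHermitian
    | (u, none) => (hσ u).real_smul ε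
    | (u, some v) => (hpA (u, v)).real_smul _
  rw [sum_sum_smul_ketbra_erasureKet_kronecker, sum_sum_smul_ketbra_kronecker,
    sum_sum_smul_ketbra_ketbra_kronecker, mutInfo_sum_ketbra_kronecker hblock,
    mutInfo_sum_ketbra_kronecker hσ, mutInfo_sum_ketbra_kronecker hpA, sum_erasureBlock,
    sum_entropyGap_erasureBlock p ε A hA, ← Fintype.sum_prod_type']
  ring

end Erasure

theorem erasure_extension_info_difference_general {dU dV dB dS : ℕ}
    (p : Fin dU × Fin dV → ℝ)
    (ε : ℝ)
    (ρBS : Fin dU → Fin dV → Matrix ((Fin dB) × (Fin dS)) ((Fin dB) × (Fin dS)) ℂ)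
    (hρBS : ∀ u v, IsDensityMatrix (ρBS u v)) :
    (mutInfo (∑ u, ∑ v, (p (u, v) : ℂ) •
          ((ketbra u ⊗ₖ erasureKet ε v) ⊗ₖ traceOutSnd (ρBS u v))) -
        mutInfo (∑ u, ∑ v, (p (u, v) : ℂ) •
          ((ketbra u ⊗ₖ erasureKet ε v) ⊗ₖ traceOutFst (ρBS u v)))) =
      (mutInfo (∑ u, ∑ v, (p (u, v) : ℂ) • (ketbra u ⊗ₖ traceOutSnd (ρBS u v))) -
        mutInfo (∑ u, ∑ v, (p (u, v) : ℂ) • (ketbra u ⊗ₖ traceOutFst (ρBS u v)))) +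
      (1 - ε) *
        ((mutInfo (∑ u, ∑ v, (p (u, v) : ℂ) •
              ((ketbra u ⊗ₖ ketbra v) ⊗ₖ traceOutSnd (ρBS u v))) -
            mutInfo (∑ u, ∑ v, (p (u, v) : ℂ) • (ketbra u ⊗ₖ traceOutSnd (ρBS u v)))) -
          (mutInfo (∑ u, ∑ v, (p (u, v) : ℂ) •
              ((ketbra u ⊗ₖ ketbra v) ⊗ₖ traceOutFst (ρBS u v))) -
            mutInfo (∑ u, ∑ v, (p (u, v) : ℂ) • (ketbra u ⊗ₖ traceOutFst (ρBS u v))))) := by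
  have hB := mutInfo_erasure p ε (fun u v => traceOutSnd (ρBS u v))
    fun u v => isHermitian_traceOutSnd (hρBS u v).1.isHermitian
  have hS := mutInfo_erasure p ε (fun u v => traceOutFst (ρBS u v))
    fun u v => isHermitian_traceOutFst (hρBS u v).1.isHermitian
  rw [hB, hS]
  ring

/-- With `U′ = (U,Ṽ)`,
`I[U′;B] − I[U′;S] = I[U;B] − I[U;S] + (1−ε)(I[V;B|U] − I[V;S|U])`. -/
theorem erasure_extension_info_difference {dU dV dB dS : ℕ}
    (p : Fin dU × Fin dV → ℝ) (hp : ∀ x, 0 ≤ p x) (hp1 : ∑ x, p x = 1)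
    (ε : ℝ) (hε : ε ∈ Set.Icc (0 : ℝ) 1)
    (ρBS : Fin dU → Fin dV → Matrix ((Fin dB) × (Fin dS)) ((Fin dB) × (Fin dS)) ℂ)
    (hρBS : ∀ u v, IsDensityMatrix (ρBS u v)) :
    (mutInfo (∑ u, ∑ v, (p (u, v) : ℂ) •
          ((ketbra u ⊗ₖ erasureKet ε v) ⊗ₖ traceOutSnd (ρBS u v))) -
        mutInfo (∑ u, ∑ v, (p (u, v) : ℂ) •
          ((ketbra u ⊗ₖ erasureKet ε v) ⊗ₖ traceOutFst (ρBS u v)))) =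
      (mutInfo (∑ u, ∑ v, (p (u, v) : ℂ) • (ketbra u ⊗ₖ traceOutSnd (ρBS u v))) -
        mutInfo (∑ u, ∑ v, (p (u, v) : ℂ) • (ketbra u ⊗ₖ traceOutFst (ρBS u v)))) +
      (1 - ε) *
        ((mutInfo (∑ u, ∑ v, (p (u, v) : ℂ) •
              ((ketbra u ⊗ₖ ketbra v) ⊗ₖ traceOutSnd (ρBS u v))) -
            mutInfo (∑ u, ∑ v, (p (u, v) : ℂ) • (ketbra u ⊗ₖ traceOutSnd (ρBS u v)))) -
          (mutInfo (∑ u, ∑ v, (p (u, v) : ℂ) •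
              ((ketbra u ⊗ₖ ketbra v) ⊗ₖ traceOutFst (ρBS u v))) -
            mutInfo (∑ u, ∑ v, (p (u, v) : ℂ) • (ketbra u ⊗ₖ traceOutFst (ρBS u v))))) :=
  erasure_extension_info_difference_general p ε ρBS hρBS

end
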